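/- Let 𝒰 be a cube partition of ℕ⁺ of order (ℓ₁,...,ℓ_r) whose classes each have upper density ∏_{i=1}^r(1/ℓᵢ), with cube colouring c_𝒰. Then every directed monochromatic path in colour r+1 has upper density at most ∏_{i=1}^r(1/ℓᵢ). -/

import Mathlib

open scoped Classical

/-- Upper density of a set of positive integers. -/
noncomputable def upperDensity (A : Set ℕ) : ℝ :=
  Filter.limsup
    (fun n : ℕ => (((Finset.Icc 1 n).filter (fun m => m ∈ A)).card : ℝ) / n)
    Filter.atTop

/-- `k` is the least index at which the tuples `a` and `b` differ. -/
def LeastDiff {r : ℕ} {ℓ : Fin r → ℕ} (a b : ∀ i, Fin (ℓ i)) (k : Fin r) : Prop :=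
  a k ≠ b k ∧ ∀ k' : Fin r, k' < k → a k' = b k'

/-- `c` is the cube colouring associated to the cube partition whose classes are
the fibres of `f` (which maps each positive integer to the index of its class in
the cube `∏ i, {0, …, ℓ i - 1}`): edges within a class get colour `r + 1`; for
`m, n` in different classes with least differing index `k`, if the `k`-th
coordinate of `m`'s class is smaller then `(m, n)` gets colour `r + 1` and
`(n, m)` gets colour `k`. -/
def IsCubeColouring {r : ℕ} {ℓ : Fin r → ℕ} (f : ℕ → ∀ i, Fin (ℓ i))
    (c : ℕ → ℕ → Fin (r + 1)) : Prop :=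
  ∀ m n : ℕ, m ≠ n →
    (f m = f n → c m n = Fin.last r) ∧
    ∀ k : Fin r, LeastDiff (f m) (f n) k →
      (f m k < f n k → c m n = Fin.last r) ∧
      (f n k < f m k → c m n = k.castSucc)

/-
An edge of colour `r + 1` never goes down in the lexicographic order of the class indices: if
`(m, n)` went down, with least differing index `k`, it would have colour `k`. Along an infinite
path of colour `r + 1` the class indices therefore form a monotone sequence in a finite linear
order, which is eventually constant; so, up to finitely many vertices, the path lies in a single
class, whose upper density is `∏ i, 1 / ℓ i`. A finite path has upper density `0`.
-/

open Filter Topology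

noncomputable def partialDensity (A : Set ℕ) (n : ℕ) : ℝ :=
  (((Finset.Icc 1 n).filter (fun m => m ∈ A)).card : ℝ) / n

theorem upperDensity_eq_limsup_partialDensity (A : Set ℕ) :
    upperDensity A = limsup (partialDensity A) atTop :=
  rfl

theorem partialDensity_nonneg (A : Set ℕ) (n : ℕ) : 0 ≤ partialDensity A n := by
  unfold partialDensity
  positivity

theorem partialDensity_le_one (A : Set ℕ) (n : ℕ) : partialDensity A n ≤ 1 := by
  unfold partialDensity
  apply div_le_one_of_le₀ _ n.cast_nonneg
  exact_mod_cast (Finset.card_filter_le _ _).trans_eq (Nat.card_Icc 1 n)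

theorem isBoundedUnder_le_partialDensity (A : Set ℕ) :
    IsBoundedUnder (· ≤ ·) atTop (partialDensity A) :=
  isBoundedUnder_of ⟨1, partialDensity_le_one A⟩

theorem isBoundedUnder_ge_partialDensity (A : Set ℕ) :
    IsBoundedUnder (· ≥ ·) atTop (partialDensity A) :=
  isBoundedUnder_of ⟨0, partialDensity_nonneg A⟩

theorem partialDensity_le_add_of_subset_union {A B : Set ℕ} (F : Finset ℕ) (h : A ⊆ B ∪ F)
    (n : ℕ) : partialDensity A n ≤ partialDensity B n + F.card / n := by
  unfold partialDensity
  rw [← add_div]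
  gcongr
  have hsub : (Finset.Icc 1 n).filter (· ∈ A) ⊆ (Finset.Icc 1 n).filter (· ∈ B) ∪ F := by
    intro m hm
    simp only [Finset.mem_filter, Finset.mem_union] at hm ⊢
    exact (h hm.2).imp (⟨hm.1, ·⟩) id
  exact_mod_cast (Finset.card_le_card hsub).trans (Finset.card_union_le _ _)

theorem upperDensity_le_of_subset_union {A B : Set ℕ} (F : Finset ℕ) (h : A ⊆ B ∪ F) :
    upperDensity A ≤ upperDensity B := by
  have hF : Tendsto (fun n : ℕ => (F.card : ℝ) / n) atTop (𝓝 0) :=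
    tendsto_const_div_atTop_nhds_zero_nat _
  calc upperDensity A
      ≤ limsup (partialDensity B + fun n : ℕ => (F.card : ℝ) / n) atTop :=
        limsup_le_limsup (Eventually.of_forall (partialDensity_le_add_of_subset_union F h))
          (isBoundedUnder_ge_partialDensity A).isCoboundedUnder_le
          (isBoundedUnder_le_add (isBoundedUnder_le_partialDensity B) hF.isBoundedUnder_le)
    _ ≤ upperDensity B + limsup (fun n : ℕ => (F.card : ℝ) / n) atTop :=
        limsup_add_le (isBoundedUnder_ge_partialDensity B) (isBoundedUnder_le_partialDensity B)
          hF.isBoundedUnder_ge.isCoboundedUnder_le hF.isBoundedUnder_le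
    _ = upperDensity B := by rw [hF.limsup_eq, add_zero]

theorem upperDensity_empty : upperDensity ∅ = 0 := by
  have h : partialDensity ∅ = fun _ => 0 := funext fun n => by simp [partialDensity]
  rw [upperDensity_eq_limsup_partialDensity, h, limsup_const]

theorem upperDensity_finset_le_zero (F : Finset ℕ) : upperDensity F ≤ 0 :=
  upperDensity_empty ▸ upperDensity_le_of_subset_union F (Set.subset_union_right)

theorem upperDensity_range_le_of_eventually_mem {v : ℕ → ℕ} {B : Set ℕ}
    (h : ∀ᶠ i in atTop, v i ∈ B) : upperDensity (Set.range v) ≤ upperDensity B := by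
  obtain ⟨N, hN⟩ := eventually_atTop.1 h
  refine upperDensity_le_of_subset_union ((Finset.range N).image v) ?_
  rintro _ ⟨i, rfl⟩
  rcases lt_or_ge i N with hi | hi
  · exact Or.inr (by simpa using ⟨i, hi, rfl⟩)
  · exact Or.inl (hN i hi)

namespace IsCubeColouring

variable {r : ℕ} {ℓ : Fin r → ℕ} {f : ℕ → ∀ i, Fin (ℓ i)} {c : ℕ → ℕ → Fin (r + 1)}

theorem toLex_le_of_eq_last (hc : IsCubeColouring f c) {m n : ℕ} (hmn : m ≠ n)
    (hcol : c m n = Fin.last r) : toLex (f m) ≤ toLex (f n) := by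
  refine le_of_not_gt fun ⟨k, hagree, hk⟩ => (Fin.castSucc_lt_last k).ne ?_
  rw [← hcol]
  exact (((hc m n hmn).2 k ⟨hk.ne', fun j hj => (hagree j hj).symm⟩).2 hk).symm

theorem eventually_eq_of_path (hc : IsCubeColouring f c) {v : ℕ → ℕ}
    (hv : Function.Injective v) (hpath : ∀ i, c (v i) (v (i + 1)) = Fin.last r) :
    ∃ x, ∀ᶠ i in atTop, f (v i) = x := by
  let g : ℕ →o Lex (∀ i, Fin (ℓ i)) :=
    ⟨fun i => toLex (f (v i)), monotone_nat_of_le_succ fun i =>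
      hc.toLex_le_of_eq_last (hv.ne i.succ_ne_self.symm) (hpath i)⟩
  obtain ⟨N, hN⟩ := WellFoundedGT.monotone_chain_condition g
  exact ⟨f (v N), eventually_atTop.2 ⟨N, fun i hi => (toLex.injective (hN i hi)).symm⟩⟩

end IsCubeColouring

theorem stmt11 (r : ℕ) (ℓ : Fin r → ℕ)
    (f : ℕ → ∀ i, Fin (ℓ i))
    (hdens : ∀ x : ∀ i, Fin (ℓ i),
      upperDensity (f ⁻¹' {x}) = ∏ i, (1 : ℝ) / ℓ i)
    (c : ℕ → ℕ → Fin (r + 1)) (hc : IsCubeColouring f c) :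
    (∀ v : ℕ → ℕ, Function.Injective v →
      (∀ i : ℕ, c (v i) (v (i + 1)) = Fin.last r) →
      upperDensity (Set.range v) ≤ ∏ i, (1 : ℝ) / ℓ i) ∧
    (∀ (m : ℕ) (v : Fin (m + 1) → ℕ), Function.Injective v →
      (∀ j : Fin m, c (v j.castSucc) (v j.succ) = Fin.last r) →
      upperDensity (Set.range v) ≤ ∏ i, (1 : ℝ) / ℓ i) := by
  constructor
  · intro v hv hpath
    obtain ⟨x, hx⟩ := hc.eventually_eq_of_path hv hpath
    exact hdens x ▸ upperDensity_range_le_of_eventually_mem hx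
  · intro m v _ _
    calc upperDensity (Set.range v) ≤ 0 := by
          simpa using upperDensity_finset_le_zero (Finset.univ.image v)
      _ ≤ ∏ i, (1 : ℝ) / ℓ i := by positivity
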